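/- Let p and q be coprime positive integers. Let f ∈ ℂ⟦x,y⟧ be nonzero with (p,q)-weighted order ν, i.e., f_{i,j} = 0 whenever p·i + q·j < ν and f_{i,j} ≠ 0 for some (i,j) with p·i + q·j = ν. Assume p·q divides ν. Then for every natural number n ≥ ν/(p·q), the quotient of ℂ⟦x,y⟧ by the ideal J_{p,q,n} + ⟨f⟩ is a finite-dimensional ℂ-vector space of dimension n·ν − ν·(ν − p − q + 1)/(2·p·q); equivalently, 2·p·q · dim_ℂ ( ℂ⟦x,y⟧/(J_{p,q,n} + ⟨f⟩) ) = 2·p·q·n·ν − ν·(ν − p − q + 1). -/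

import Mathlib

/-- The ideal `J_{p,q,n}` of `ℂ⟦x,y⟧` generated by the monomials `x^i y^j` with
`p·i + q·j ≥ p·q·n`; this is the `n`-th power of the integral closure `I_{p,q}`
of `⟨x^q, y^p⟩`. -/
noncomputable def Jpqn (p q n : ℕ) : Ideal (MvPowerSeries (Fin 2) ℂ) :=
  Ideal.span {F | ∃ i j : ℕ, p * q * n ≤ p * i + q * j ∧
    F = (MvPowerSeries.X 0 : MvPowerSeries (Fin 2) ℂ) ^ i * (MvPowerSeries.X 1) ^ j}

/-!
The ideal `J_{p,q,k}` consists of the series of `(p,q)`-weighted order at least `pqk`, so its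
codimension is the number `T(k)` of lattice points with `p i + q j < pqk`. Reflecting the rectangle
`[0, qk] × [0, pk]` through its centre exchanges the points below and above the line
`p i + q j = pqk`, which by coprimality carries exactly `k + 1` lattice points; hence
`2 T(k) + k = pqk² + (p + q) k`. Write `ν = pqm`. Since weighted orders add under multiplication,
`f g ∈ J_{p,q,n}` iff `g ∈ J_{p,q,n-m}`, so multiplication by `f` maps `ℂ⟦x,y⟧ ⧸ J_{p,q,n-m}`
isomorphically onto `(J_{p,q,n} + ⟨f⟩) ⧸ J_{p,q,n}`, and the dimension sought is `T(n) - T(n - m)`.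
-/

open MvPowerSeries Finsupp Finset Module

section LatticePoints

variable {p q : ℕ}

theorem card_weight_eq_mul (hq : 0 < q) (hpq : p.Coprime q) (k : ℕ) :
    #{ij ∈ range (q * k + 1) ×ˢ range (p * k + 1) | p * ij.1 + q * ij.2 = p * q * k} = k + 1 := by
  symm
  rw [← card_range (k + 1)]
  refine card_bij' (fun t _ => (q * t, p * (k - t))) (fun ij _ => ij.1 / q) ?_ ?_ ?_ ?_
  · intro t ht
    obtain ⟨s, rfl⟩ := Nat.exists_eq_add_of_le (Nat.lt_succ_iff.mp (mem_range.mp ht))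
    simp only [mem_filter, mem_product, mem_range, Nat.add_sub_cancel_left]
    refine ⟨⟨?_, ?_⟩, by ring⟩ <;> nlinarith
  · intro ij hij
    simp only [mem_filter, mem_product, mem_range] at hij ⊢
    rw [Nat.lt_succ_iff, Nat.div_le_iff_le_mul_add_pred hq]
    nlinarith
  · intro t _
    simp [Nat.mul_div_cancel_left t hq]
  · rintro ⟨i, j⟩ hij
    simp only [mem_filter, mem_product, mem_range] at hij
    obtain ⟨t, rfl⟩ : q ∣ i := hpq.symm.dvd_of_dvd_mul_left ⟨p * k - j, by
      rw [Nat.mul_sub, show q * (p * k) = p * q * k by ring, ← hij.2]; omega⟩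
    have hj : p * t + j = p * k := by
      apply Nat.eq_of_mul_eq_mul_left hq
      linear_combination hij.2
    simp only [Nat.mul_div_cancel_left t hq, Prod.mk.injEq, true_and, Nat.mul_sub]
    omega

theorem card_weight_gt_mul_eq_card_weight_lt (p q k : ℕ) :
    #{ij ∈ range (q * k + 1) ×ˢ range (p * k + 1) | p * q * k < p * ij.1 + q * ij.2} =
      #{ij ∈ range (q * k + 1) ×ˢ range (p * k + 1) | p * ij.1 + q * ij.2 < p * q * k} := by
  have reflect : ∀ i j, i ≤ q * k → j ≤ p * k →
      p * (q * k - i) + q * (p * k - j) + (p * i + q * j) = 2 * (p * q * k) := by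
    intro i j hi hj
    have := Nat.mul_le_mul_left p hi
    have := Nat.mul_le_mul_left q hj
    have : p * (q * k) = p * q * k := by ring
    have : q * (p * k) = p * q * k := by ring
    rw [Nat.mul_sub, Nat.mul_sub]
    omega
  refine card_nbij' (fun ij => (q * k - ij.1, p * k - ij.2)) (fun ij => (q * k - ij.1, p * k - ij.2))
    ?_ ?_ ?_ ?_ <;>
  · rintro ⟨i, j⟩ hij
    simp only [coe_filter, mem_product, mem_range, Set.mem_ofPred_eq, Prod.mk.injEq] at hij ⊢
    have := reflect i j (by omega) (by omega)
    omega

theorem two_mul_card_weight_lt_add (hq : 0 < q) (hpq : p.Coprime q) (k : ℕ) :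
    2 * #{ij ∈ range (q * k + 1) ×ˢ range (p * k + 1) | p * ij.1 + q * ij.2 < p * q * k} + k =
      p * q * k * k + (p + q) * k := by
  set R := range (q * k + 1) ×ˢ range (p * k + 1)
  have hR : #R = (q * k + 1) * (p * k + 1) := by simp [R]
  have hlt := card_filter_add_card_filter_not (s := R) (fun ij => p * ij.1 + q * ij.2 < p * q * k)
  have hge := card_filter_add_card_filter_not (s := R.filter fun ij => ¬ p * ij.1 + q * ij.2 < p * q * k)
    (fun ij => p * ij.1 + q * ij.2 = p * q * k)
  have heq : R.filter (fun ij => ¬ p * ij.1 + q * ij.2 < p * q * k ∧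
      p * ij.1 + q * ij.2 = p * q * k) = R.filter (fun ij => p * ij.1 + q * ij.2 = p * q * k) :=
    filter_congr fun _ _ => by omega
  have hgt : R.filter (fun ij => ¬ p * ij.1 + q * ij.2 < p * q * k ∧
      ¬ p * ij.1 + q * ij.2 = p * q * k) = R.filter (fun ij => p * q * k < p * ij.1 + q * ij.2) :=
    filter_congr fun _ _ => by omega
  rw [filter_filter, filter_filter, heq, hgt, card_weight_eq_mul hq hpq,
    card_weight_gt_mul_eq_card_weight_lt] at hge
  rw [hR] at hlt
  nlinarith

end LatticePoints

section WeightedMonomialIdeal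

variable {R : Type*} [CommSemiring R] {p q : ℕ}

theorem nat_le_weightedOrder_iff {σ : Type*} {w : σ → ℕ} {n : ℕ} {F : MvPowerSeries σ R} :
    (n : ℕ∞) ≤ F.weightedOrder w ↔ ∀ d, weight w d < n → coeff d F = 0 :=
  ⟨fun hF _ hd => coeff_eq_zero_of_lt_weightedOrder w (lt_of_lt_of_le (by exact_mod_cast hd) hF),
    nat_le_weightedOrder w⟩

@[simp]
theorem weight_pair (p q : ℕ) (d : Fin 2 →₀ ℕ) : weight ![p, q] d = p * d 0 + q * d 1 := by
  simp [weight_eq_sum, Fin.sum_univ_two, mul_comm]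

theorem single_zero_add_single_one (d : Fin 2 →₀ ℕ) : single 0 (d 0) + single 1 (d 1) = d := by
  ext i; fin_cases i <;> simp

theorem weightedOrder_X_pow_mul_X_pow [Nontrivial R] (i j : ℕ) :
    (X 0 ^ i * X 1 ^ j : MvPowerSeries (Fin 2) R).weightedOrder ![p, q] = (p * i + q * j : ℕ) := by
  rw [X_pow_eq, X_pow_eq, monomial_mul_monomial, mul_one,
    weightedOrder_monomial_of_ne_zero _ one_ne_zero]
  simp

theorem weightedOrder_eq_of_coeff {f : MvPowerSeries (Fin 2) R} {ν : ℕ}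
    (h₁ : ∀ i j : ℕ, p * i + q * j < ν → coeff (single 0 i + single 1 j) f = 0)
    (h₂ : ∃ i j : ℕ, p * i + q * j = ν ∧ coeff (single 0 i + single 1 j) f ≠ 0) :
    f.weightedOrder ![p, q] = ν := by
  obtain ⟨i, j, hij, hc⟩ := h₂
  refine (weightedOrder_eq_nat _).mpr ⟨⟨_, hc, by simpa using hij⟩, fun d hd => ?_⟩
  rw [← single_zero_add_single_one d]
  exact h₁ _ _ (by simpa using hd)

theorem monomial_one_dvd_of_coeff_ne_zero {σ : Type*} {m : σ →₀ ℕ} {φ : MvPowerSeries σ R}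
    (h : ∀ d, coeff d φ ≠ 0 → m ≤ d) : monomial m 1 ∣ φ := by
  let ψ : MvPowerSeries σ R := fun e => coeff (e + m) φ
  refine ⟨ψ, ?_⟩
  ext d
  rw [coeff_monomial_mul]
  split_ifs with hmd
  · rw [one_mul, show coeff (d - m) ψ = coeff (d - m + m) φ from rfl, tsub_add_cancel_of_le hmd]
  · by_contra hd
    exact hmd (h d hd)

/-- The part of `F` in row `t` (the exponents `d` with `d 1 = t`) for `t < N`, and in the rows
`≥ N` for `t = N`. -/
def rowPart (N t : ℕ) (F : MvPowerSeries (Fin 2) R) : MvPowerSeries (Fin 2) R :=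
  fun d => if min (d 1) N = t then coeff d F else 0

theorem sum_rowPart (N : ℕ) (F : MvPowerSeries (Fin 2) R) :
    ∑ t ∈ range (N + 1), rowPart N t F = F := by
  ext d
  rw [map_sum]
  simp only [rowPart, coeff_apply]
  rw [Finset.sum_ite_eq, if_pos (mem_range.mpr (Nat.lt_succ_of_le (min_le_right _ _)))]

theorem single_ceilDiv_add_single_le (hp : 0 < p) {N t : ℕ} {d : Fin 2 →₀ ℕ}
    (hN : N ≤ p * d 0 + q * d 1) (ht : min (d 1) N = t) :
    single 0 ((N - q * t) ⌈/⌉ p) + single 1 t ≤ d := by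
  have hrow : N - q * t ≤ p * d 0 := by
    rcases le_total (d 1) N with h | h
    · rw [← ht, min_eq_left h]
      omega
    · rw [← ht, min_eq_right h]
      rcases Nat.eq_zero_or_pos q with rfl | hq
      · simpa using hN
      · have := Nat.le_mul_of_pos_left N hq
        omega
  rw [← single_zero_add_single_one d]
  refine add_le_add (single_le_single.mpr ?_) (single_le_single.mpr (ht ▸ min_le_left _ _))
  rwa [ceilDiv_le_iff_le_smul hp, smul_eq_mul]

theorem mem_span_monomials_iff [Nontrivial R] (hp : 0 < p) (N : ℕ) (F : MvPowerSeries (Fin 2) R) :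
    F ∈ Ideal.span {G | ∃ i j : ℕ, N ≤ p * i + q * j ∧ G = X 0 ^ i * X 1 ^ j} ↔
      (N : ℕ∞) ≤ F.weightedOrder ![p, q] := by
  constructor
  · intro hF
    induction hF using Submodule.span_induction with
    | mem G hG =>
      obtain ⟨i, j, hij, rfl⟩ := hG
      rw [weightedOrder_X_pow_mul_X_pow]
      exact_mod_cast hij
    | zero => simp
    | add G H _ _ hG hH => exact (le_min hG hH).trans (min_weightedOrder_le_add _)
    | smul a G _ hG => exact hG.trans (le_add_self.trans (le_weightedOrder_mul _))
  · intro hF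
    rw [← sum_rowPart N F]
    refine Ideal.sum_mem _ fun t _ => ?_
    have ha : N - q * t ≤ p * ((N - q * t) ⌈/⌉ p) := by
      simpa using le_smul_ceilDiv (b := N - q * t) hp
    obtain ⟨G, hG⟩ : monomial (single 0 ((N - q * t) ⌈/⌉ p) + single 1 t) (1 : R) ∣
        rowPart N t F := by
      refine monomial_one_dvd_of_coeff_ne_zero fun d hd => ?_
      simp only [rowPart, coeff_apply, ite_ne_right_iff] at hd
      refine single_ceilDiv_add_single_le hp ?_ hd.1
      by_contra! hlt
      refine hd.2 (coeff_eq_zero_of_lt_weightedOrder _ (lt_of_lt_of_le ?_ hF))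
      rw [weight_pair]
      exact_mod_cast hlt
    rw [hG]
    refine Ideal.mul_mem_right _ _ (Ideal.subset_span ⟨(N - q * t) ⌈/⌉ p, t, by omega, ?_⟩)
    rw [X_pow_eq, X_pow_eq, monomial_mul_monomial, mul_one]

end WeightedMonomialIdeal

section CoeffsOn

variable {σ K : Type*} [Field K]

def coeffsOn (S : Finset (σ →₀ ℕ)) : MvPowerSeries σ K →ₗ[K] (S → K) :=
  LinearMap.pi fun d => coeff d.1

theorem coeffsOn_surjective (S : Finset (σ →₀ ℕ)) : Function.Surjective (coeffsOn (K := K) S) := by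
  classical
  intro c
  refine ⟨∑ d ∈ S.attach, monomial d.1 (c d), funext fun e => ?_⟩
  simp only [coeffsOn, LinearMap.pi_apply, map_sum, coeff_monomial]
  rw [Finset.sum_eq_single e (fun d _ hde => if_neg fun h => hde (Subtype.ext h.symm))
    (fun h => absurd (mem_attach _ e) h), if_pos rfl]

noncomputable def quotEquivCoeffsOn (S : Finset (σ →₀ ℕ)) (I : Ideal (MvPowerSeries σ K))
    (hI : ∀ F, F ∈ I ↔ ∀ d ∈ S, coeff d F = 0) : (MvPowerSeries σ K ⧸ I) ≃ₗ[K] (S → K) :=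
  (Submodule.Quotient.restrictScalarsEquiv K I).symm ≪≫ₗ
    Submodule.quotEquivOfEq _ _ (by ext F; simp [hI, coeffsOn, funext_iff]) ≪≫ₗ
    (coeffsOn S).quotKerEquivOfSurjective (coeffsOn_surjective S)

theorem finrank_quotient_eq_card (S : Finset (σ →₀ ℕ)) (I : Ideal (MvPowerSeries σ K))
    (hI : ∀ F, F ∈ I ↔ ∀ d ∈ S, coeff d F = 0) :
    FiniteDimensional K (MvPowerSeries σ K ⧸ I) ∧ finrank K (MvPowerSeries σ K ⧸ I) = #S := by
  have e := quotEquivCoeffsOn S I hI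
  exact ⟨e.symm.finiteDimensional, by rw [e.finrank_eq]; simp⟩

end CoeffsOn

theorem finrank_quotient_sup_span_singleton_add {K A : Type*} [Field K] [CommRing A] [Algebra K A]
    {J J' : Ideal A} {f : A} (hJ' : ∀ g, f * g ∈ J ↔ g ∈ J') [FiniteDimensional K (A ⧸ J)] :
    FiniteDimensional K (A ⧸ (J ⊔ Ideal.span {f})) ∧
      finrank K (A ⧸ (J ⊔ Ideal.span {f})) + finrank K (A ⧸ J') = finrank K (A ⧸ J) := by
  let π := (DoubleQuot.quotLeftToQuotSupₐ K J (Ideal.span {f})).toLinearMap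
  have hπ : Function.Surjective π := Ideal.Quotient.factor_surjective le_sup_left
  let φ : (A ⧸ J') →ₗ[K] A ⧸ J := (J'.liftQ (f • J.mkQ) fun g hg =>
    (Submodule.Quotient.mk_eq_zero J (x := f • g)).mpr ((hJ' g).mpr hg)).restrictScalars K
  have hφ_mk : ∀ g, φ (Ideal.Quotient.mk J' g) = Ideal.Quotient.mk J (f * g) := fun _ => rfl
  have hφ : Function.Injective φ := by
    rw [← LinearMap.ker_eq_bot, LinearMap.ker_eq_bot']
    intro x hx
    obtain ⟨g, rfl⟩ := Ideal.Quotient.mk_surjective x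
    rw [hφ_mk, Ideal.Quotient.eq_zero_iff_mem] at hx
    exact Ideal.Quotient.eq_zero_iff_mem.mpr ((hJ' g).mp hx)
  have hker : LinearMap.ker π = LinearMap.range φ := by
    ext x
    change x ∈ RingHom.ker (DoubleQuot.quotLeftToQuotSup J _) ↔ _
    rw [DoubleQuot.ker_quotLeftToQuotSup, Ideal.map_span, Set.image_singleton,
      Ideal.mem_span_singleton', LinearMap.mem_range]
    constructor
    · rintro ⟨y, rfl⟩
      obtain ⟨g, rfl⟩ := Ideal.Quotient.mk_surjective y
      exact ⟨Ideal.Quotient.mk J' g, by rw [hφ_mk, map_mul, mul_comm]⟩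
    · rintro ⟨z, rfl⟩
      obtain ⟨g, rfl⟩ := Ideal.Quotient.mk_surjective z
      exact ⟨Ideal.Quotient.mk J g, by rw [hφ_mk, map_mul, mul_comm]⟩
  refine ⟨Module.Finite.of_surjective π hπ, ?_⟩
  rw [← LinearMap.finrank_range_add_finrank_ker π, LinearMap.range_eq_top.mpr hπ, finrank_top, hker,
    LinearMap.finrank_range_of_inj hφ]

section Jpqn

variable {p q : ℕ}

theorem mem_Jpqn_iff (hp : 0 < p) {n : ℕ} {F : MvPowerSeries (Fin 2) ℂ} :
    F ∈ Jpqn p q n ↔ ((p * q * n : ℕ) : ℕ∞) ≤ F.weightedOrder ![p, q] :=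
  mem_span_monomials_iff hp _ F

theorem mul_mem_Jpqn_iff (hp : 0 < p) {f g : MvPowerSeries (Fin 2) ℂ} {m n : ℕ}
    (hf : f.weightedOrder ![p, q] = (p * q * m : ℕ)) (hmn : m ≤ n) :
    f * g ∈ Jpqn p q n ↔ g ∈ Jpqn p q (n - m) := by
  rw [mem_Jpqn_iff hp, mem_Jpqn_iff hp, weightedOrder_mul, hf,
    show p * q * n = p * q * m + p * q * (n - m) by rw [← mul_add, Nat.add_sub_cancel' hmn],
    Nat.cast_add, ENat.add_le_add_iff_left (ENat.natCast_ne_top _)]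

noncomputable def weightLtExps (p q k : ℕ) : Finset (Fin 2 →₀ ℕ) :=
  {ij ∈ range (q * k + 1) ×ˢ range (p * k + 1) | p * ij.1 + q * ij.2 < p * q * k}.map
    (finTwoArrowEquiv' ℕ).symm.toEmbedding

theorem mem_weightLtExps (hp : 0 < p) (hq : 0 < q) {k : ℕ} {d : Fin 2 →₀ ℕ} :
    d ∈ weightLtExps p q k ↔ weight ![p, q] d < p * q * k := by
  rw [weightLtExps, mem_map_equiv, Equiv.symm_symm, mem_filter, weight_pair]
  simp only [finTwoArrowEquiv'_apply, mem_product, mem_range, and_iff_right_iff_imp]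
  intro h
  constructor <;> nlinarith

theorem finrank_quotient_Jpqn (hp : 0 < p) (hq : 0 < q) (hpq : p.Coprime q) (k : ℕ) :
    FiniteDimensional ℂ (MvPowerSeries (Fin 2) ℂ ⧸ Jpqn p q k) ∧
      2 * finrank ℂ (MvPowerSeries (Fin 2) ℂ ⧸ Jpqn p q k) + k = p * q * k * k + (p + q) * k := by
  have hI : ∀ F, F ∈ Jpqn p q k ↔ ∀ d ∈ weightLtExps p q k, coeff d F = 0 := by
    intro F
    simp only [mem_Jpqn_iff hp, nat_le_weightedOrder_iff, mem_weightLtExps hp hq]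
  obtain ⟨hfin, hrank⟩ := finrank_quotient_eq_card _ _ hI
  refine ⟨hfin, ?_⟩
  rw [hrank, weightLtExps, card_map]
  exact two_mul_card_weight_lt_add hq hpq k

end Jpqn

theorem dim_quotient_Jpqn_add_f_general (p q : ℕ) (hp : 0 < p) (hq : 0 < q) (hpq : Nat.Coprime p q)
    (f : MvPowerSeries (Fin 2) ℂ) (ν : ℕ)
    (hord₁ : ∀ i j : ℕ, p * i + q * j < ν →
      MvPowerSeries.coeff (R := ℂ) (Finsupp.single (0 : Fin 2) i + Finsupp.single 1 j) f = 0)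
    (hord₂ : ∃ i j : ℕ, p * i + q * j = ν ∧
      MvPowerSeries.coeff (R := ℂ) (Finsupp.single (0 : Fin 2) i + Finsupp.single 1 j) f ≠ 0)
    (hdvd : p * q ∣ ν) (n : ℕ) (hn : ν ≤ p * q * n) :
    FiniteDimensional ℂ (MvPowerSeries (Fin 2) ℂ ⧸ (Jpqn p q n ⊔ Ideal.span {f})) ∧
    (2 * p * q *
        Module.finrank ℂ (MvPowerSeries (Fin 2) ℂ ⧸ (Jpqn p q n ⊔ Ideal.span {f})) : ℤ) =
      2 * p * q * n * ν - (ν : ℤ) * ((ν : ℤ) - p - q + 1) := by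
  obtain ⟨m, rfl⟩ := hdvd
  have hmn : m ≤ n := Nat.le_of_mul_le_mul_left hn (Nat.mul_pos hp hq)
  have hf : f.weightedOrder ![p, q] = (p * q * m : ℕ) := weightedOrder_eq_of_coeff hord₁ hord₂
  obtain ⟨_, hrank_n⟩ := finrank_quotient_Jpqn hp hq hpq n
  have hrank_nm := (finrank_quotient_Jpqn hp hq hpq (n - m)).2
  obtain ⟨hfin, hsum⟩ := finrank_quotient_sup_span_singleton_add (K := ℂ) (J' := Jpqn p q (n - m))
    fun g => mul_mem_Jpqn_iff hp hf hmn
  refine ⟨hfin, ?_⟩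
  zify [hmn] at hsum hrank_n hrank_nm
  push_cast
  linear_combination 2 * (p * q : ℤ) * hsum + (p * q : ℤ) * hrank_n - (p * q : ℤ) * hrank_nm

/-- Lemma 4.11 (formal version): if `f ∈ ℂ⟦x,y⟧` is nonzero with `(p,q)`-weighted order `ν`
divisible by `p·q`, then for every `n ≥ ν/(p·q)`,
`dim_ℂ ℂ⟦x,y⟧/(J_{p,q,n} + ⟨f⟩) = n·ν − ν(ν−p−q+1)/(2pq)`, i.e.
`2pq · dim = 2pq·n·ν − ν·(ν−p−q+1)`. -/
theorem dim_quotient_Jpqn_add_f (p q : ℕ) (hp : 0 < p) (hq : 0 < q) (hpq : Nat.Coprime p q)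
    (f : MvPowerSeries (Fin 2) ℂ) (hf0 : f ≠ 0) (ν : ℕ)
    (hord₁ : ∀ i j : ℕ, p * i + q * j < ν →
      MvPowerSeries.coeff (R := ℂ) (Finsupp.single (0 : Fin 2) i + Finsupp.single 1 j) f = 0)
    (hord₂ : ∃ i j : ℕ, p * i + q * j = ν ∧
      MvPowerSeries.coeff (R := ℂ) (Finsupp.single (0 : Fin 2) i + Finsupp.single 1 j) f ≠ 0)
    (hdvd : p * q ∣ ν) (n : ℕ) (hn : ν ≤ p * q * n) :
    FiniteDimensional ℂ (MvPowerSeries (Fin 2) ℂ ⧸ (Jpqn p q n ⊔ Ideal.span {f})) ∧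
    (2 * p * q *
        Module.finrank ℂ (MvPowerSeries (Fin 2) ℂ ⧸ (Jpqn p q n ⊔ Ideal.span {f})) : ℤ) =
      2 * p * q * n * ν - (ν : ℤ) * ((ν : ℤ) - p - q + 1) :=
  dim_quotient_Jpqn_add_f_general p q hp hq hpq f ν hord₁ hord₂ hdvd n hn
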